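/- arXiv:1404.7381 — 8 statements merged into one kernel-verified Lean document; each statement's English description precedes it below -/
import Mathlib

section
/- Let d be an integer with d ≥ 3 and let f : (0,∞) → ℝ be a twice continuously differentiable function satisfying f''(y) + ((d-1)/y - y/2) f'(y) - (d-1)/(2y²) sin(2 f(y)) = 0 for all y > 0. Then the function h(y) = y³ f'(y) satisfies the second-order linear equation y² h''(y) = α(y) h'(y) + β(y) h(y) for all y > 0, where α(y) = (1/2) y (y² - 2d + 10) and β(y) = d - 7 + (d-1)(1 + cos(2 f(y))). -/
open Real Set Filter Topology

/-- If `f : (0,∞) → ℝ` is `C²` and satisfies the harmonic map shrinker equation, then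
`h(y) = y³ f'(y)` satisfies `y² h'' = α h' + β h` with
`α(y) = (1/2) y (y² - 2d + 10)` and `β(y) = d - 7 + (d-1)(1 + cos(2f))`. -/
theorem h_equation_harmonic_map (d : ℕ) (hd : 3 ≤ d) (f : ℝ → ℝ)
    (hf : ContDiffOn ℝ 2 f (Ioi 0))
    (hode : ∀ y : ℝ, 0 < y →
      deriv (deriv f) y + (((d : ℝ) - 1) / y - y / 2) * deriv f y
        - ((d : ℝ) - 1) / (2 * y ^ 2) * Real.sin (2 * f y) = 0) :
    ∀ y : ℝ, 0 < y →
      y ^ 2 * deriv (deriv (fun z => z ^ 3 * deriv f z)) y =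
        1 / 2 * y * (y ^ 2 - 2 * (d : ℝ) + 10) *
            deriv (fun z => z ^ 3 * deriv f z) y +
          ((d : ℝ) - 7 + ((d : ℝ) - 1) * (1 + Real.cos (2 * f y))) *
            (y ^ 3 * deriv f y) := by
  intro y hy
  have hyne : y ≠ 0 := ne_of_gt hy
  have hd1 : ((d : ℝ) - 1) ≠ 0 := by
    have : (3 : ℝ) ≤ (d : ℝ) := by exact_mod_cast hd
    linarith
  have hIo : IsOpen (Ioi (0:ℝ)) := isOpen_Ioi
  have hmem : Ioi (0:ℝ) ∈ 𝓝 y := hIo.mem_nhds hy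
  have hf1 : ContDiffOn ℝ 1 (deriv f) (Ioi 0) :=
    hf.deriv_of_isOpen hIo (by norm_num)
  have hfd : ∀ z ∈ Ioi (0:ℝ), HasDerivAt f (deriv f z) z := fun z hz =>
    ((hf.differentiableOn (by norm_num)).differentiableAt (hIo.mem_nhds hz)).hasDerivAt
  have hf1d : ∀ z ∈ Ioi (0:ℝ), HasDerivAt (deriv f) (deriv (deriv f) z) z := fun z hz =>
    ((hf1.differentiableOn (by norm_num)).differentiableAt (hIo.mem_nhds hz)).hasDerivAt
  -- the ODE rewritten: f'' = F on Ioi 0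
  set F : ℝ → ℝ := fun z =>
    (z / 2 - ((d:ℝ) - 1) / z) * deriv f z
      + ((d:ℝ) - 1) / (2 * z ^ 2) * Real.sin (2 * f z) with hFdef
  have hFeq : ∀ z ∈ Ioi (0:ℝ), deriv (deriv f) z = F z := by
    intro z hz
    simp only [hFdef]
    linear_combination hode z hz
  -- derivative of F at y
  have hsin : HasDerivAt (fun z => Real.sin (2 * f z))
      (Real.cos (2 * f y) * (2 * deriv f y)) y :=
    ((hfd y hy).const_mul 2).sin
  have hu : HasDerivAt (fun z : ℝ => z / 2 - ((d:ℝ) - 1) / z)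
      (1 / 2 - (0 * y - ((d:ℝ) - 1) * 1) / y ^ 2) y :=
    ((hasDerivAt_id' y).div_const 2).sub
      ((hasDerivAt_const y ((d:ℝ) - 1)).div (hasDerivAt_id' y) hyne)
  have hden : HasDerivAt (fun z : ℝ => 2 * z ^ 2) (2 * ((2:ℕ) * y ^ (2 - 1))) y :=
    (hasDerivAt_pow 2 y).const_mul 2
  have hv : HasDerivAt (fun z : ℝ => ((d:ℝ) - 1) / (2 * z ^ 2))
      ((0 * (2 * y ^ 2) - ((d:ℝ) - 1) * (2 * ((2:ℕ) * y ^ (2 - 1)))) / (2 * y ^ 2) ^ 2) y :=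
    (hasDerivAt_const y ((d:ℝ) - 1)).div hden (by positivity)
  have hF : HasDerivAt F
      (((1 / 2 - (0 * y - ((d:ℝ) - 1) * 1) / y ^ 2) * deriv f y
          + (y / 2 - ((d:ℝ) - 1) / y) * deriv (deriv f) y)
        + ((0 * (2 * y ^ 2) - ((d:ℝ) - 1) * (2 * ((2:ℕ) * y ^ (2 - 1)))) / (2 * y ^ 2) ^ 2
              * Real.sin (2 * f y)
            + ((d:ℝ) - 1) / (2 * y ^ 2) * (Real.cos (2 * f y) * (2 * deriv f y)))) y :=
    (hu.mul (hf1d y hy)).add (hv.mul hsin)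
  have hev : deriv (deriv f) =ᶠ[𝓝 y] F := by
    filter_upwards [hmem] with z hz using hFeq z hz
  have hc3 : HasDerivAt (deriv (deriv f))
      (((1 / 2 - (0 * y - ((d:ℝ) - 1) * 1) / y ^ 2) * deriv f y
          + (y / 2 - ((d:ℝ) - 1) / y) * deriv (deriv f) y)
        + ((0 * (2 * y ^ 2) - ((d:ℝ) - 1) * (2 * ((2:ℕ) * y ^ (2 - 1)))) / (2 * y ^ 2) ^ 2
              * Real.sin (2 * f y)
            + ((d:ℝ) - 1) / (2 * y ^ 2) * (Real.cos (2 * f y) * (2 * deriv f y)))) y :=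
    hF.congr_of_eventuallyEq hev
  -- first derivative of h
  set G : ℝ → ℝ := fun z => (3:ℕ) * z ^ (3 - 1) * deriv f z + z ^ 3 * deriv (deriv f) z
    with hGdef
  have hhz : ∀ z ∈ Ioi (0:ℝ), HasDerivAt (fun w => w ^ 3 * deriv f w) (G z) z := fun z hz =>
    (hasDerivAt_pow 3 z).mul (hf1d z hz)
  have e1 : deriv (fun w => w ^ 3 * deriv f w) =ᶠ[𝓝 y] G := by
    filter_upwards [hmem] with z hz using (hhz z hz).deriv
  have hG : HasDerivAt G
      (((3:ℕ) * ((2:ℕ) * y ^ (2 - 1)) * deriv f y + (3:ℕ) * y ^ (3 - 1) * deriv (deriv f) y)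
        + (((3:ℕ) * y ^ (3 - 1)) * deriv (deriv f) y + y ^ 3 *
          (((1 / 2 - (0 * y - ((d:ℝ) - 1) * 1) / y ^ 2) * deriv f y
            + (y / 2 - ((d:ℝ) - 1) / y) * deriv (deriv f) y)
          + ((0 * (2 * y ^ 2) - ((d:ℝ) - 1) * (2 * ((2:ℕ) * y ^ (2 - 1)))) / (2 * y ^ 2) ^ 2
                * Real.sin (2 * f y)
              + ((d:ℝ) - 1) / (2 * y ^ 2) * (Real.cos (2 * f y) * (2 * deriv f y)))))) y := by
    have t1 : HasDerivAt (fun z : ℝ => (3:ℕ) * z ^ (3 - 1))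
        ((3:ℕ) * ((2:ℕ) * y ^ (2 - 1))) y := by
      simpa using ((hasDerivAt_pow 2 y).const_mul ((3:ℕ) : ℝ))
    exact (t1.mul (hf1d y hy)).add ((hasDerivAt_pow 3 y).mul hc3)
  have e3 : deriv (fun w => w ^ 3 * deriv f w) y = G y := (hhz y hy).deriv
  have hR1 : deriv (deriv f) y =
      (y / 2 - ((d:ℝ) - 1) / y) * deriv f y
        + ((d:ℝ) - 1) / (2 * y ^ 2) * Real.sin (2 * f y) := hFeq y hy
  have hs : Real.sin (2 * f y) =
      (deriv (deriv f) y - (y / 2 - ((d:ℝ) - 1) / y) * deriv f y) * (2 * y ^ 2)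
        / ((d:ℝ) - 1) := by
    rw [hR1]; field_simp; ring
  rw [e1.deriv_eq, hG.deriv, e3, hGdef]
  simp only []
  rw [hs]
  field_simp
  ring
end

section
/- Let d ≥ 7 be an integer, let a > 0, and let f : [0,∞) → ℝ be a smooth function satisfying the shrinker equation f''(y) + ((d-1)/y - y/2) f'(y) - (d-1)/(2y²) sin(2 f(y)) = 0 for all y > 0, with f(0) = 0 and f'(0) = a. Then the function h(y) = y³ f'(y) satisfies h'(y) > 0 for all y > 0. -/
/-!
Write `k = d - 1` and `E = h'`. Eliminating `f''` with the equation gives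
`E' = ((4 - k) / y + y / 2) E + y f' (2k - 6 + k cos 2f)`, and the last term is nonnegative
wherever `f' ≥ 0` because `k ≥ 6`. Hence, with the integrating factor `w = y^(k-4) e^(-y²/4)`,
`w E` is nondecreasing wherever `f' ≥ 0`. Near `0`, `E ~ 3a y² > 0`. If `E` had a first
nonpositive point `c`, then `h` would increase on `(0, c]` from `h(0+) = 0`, so `f' > 0` there,
and `w E` would be nondecreasing on `(0, c]` although positive at `c / 2` and nonpositive at `c`.
-/

open Real Set Filter Topology

theorem tendsto_deriv_nhdsGT_of_contDiffOn_Ici {F : Type*} [NormedAddCommGroup F]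
    [NormedSpace ℝ F] {f : ℝ → F} {x : ℝ} (hf : ContDiffOn ℝ 1 f (Ici x)) :
    Tendsto (deriv f) (𝓝[>] x) (𝓝 (derivWithin f (Ici x) x)) := by
  have h := (hf.continuousOn_derivWithin (uniqueDiffOn_Ici x) le_rfl x self_mem_Ici).tendsto
  refine (h.mono_left (nhdsWithin_mono x Ioi_subset_Ici_self)).congr' ?_
  filter_upwards [self_mem_nhdsWithin] with y hy
  exact derivWithin_of_mem_nhds (Ici_mem_nhds hy)

theorem exists_first_nonpos {φ : ℝ → ℝ} {a b : ℝ} (hab : a < b) (hφ : ContinuousOn φ (Ioc a b))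
    (hpos : ∀ᶠ y in 𝓝[>] a, 0 < φ y) (hb : φ b ≤ 0) :
    ∃ c ∈ Ioc a b, φ c ≤ 0 ∧ ∀ y ∈ Ioo a c, 0 < φ y := by
  obtain ⟨δ, hδ, hδpos⟩ := mem_nhdsGT_iff_exists_Ioo_subset.1 hpos
  have hδb : δ ≤ b := not_lt.1 fun h => (hδpos ⟨hab, h⟩ : 0 < φ b).not_ge hb
  set K := Icc δ b ∩ φ ⁻¹' Iic 0
  have hK : IsCompact K := isCompact_Icc.of_isClosed_subset
    ((hφ.mono (Icc_subset_Ioc_iff hδb |>.2 ⟨hδ, le_rfl⟩)).preimage_isClosed_of_isClosed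
      isClosed_Icc isClosed_Iic) inter_subset_left
  have hc : sInf K ∈ K := hK.sInf_mem ⟨b, ⟨hδb, le_rfl⟩, hb⟩
  refine ⟨sInf K, ⟨lt_of_lt_of_le hδ hc.1.1, hc.1.2⟩, hc.2, fun y hy => ?_⟩
  by_contra! hle
  rcases lt_or_ge y δ with hyδ | hδy
  · exact (hδpos ⟨hy.1, hyδ⟩ : 0 < φ y).not_ge hle
  · exact hy.2.not_ge (csInf_le hK.bddBelow ⟨⟨hδy, hy.2.le.trans hc.1.2⟩, hle⟩)

theorem StrictMonoOn.pos_of_tendsto_nhdsGT {φ : ℝ → ℝ} {a c y : ℝ}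
    (hφ : StrictMonoOn φ (Ioc a c)) (hlim : Tendsto φ (𝓝[>] a) (𝓝 0)) (hy : y ∈ Ioc a c) :
    0 < φ y := by
  have hm : (a + y) / 2 ∈ Ioc a c := ⟨by linarith [hy.1], by linarith [hy.1, hy.2]⟩
  have hle : 0 ≤ φ ((a + y) / 2) := by
    refine le_of_tendsto hlim ?_
    filter_upwards [Ioo_mem_nhdsGT hm.1] with z hz
    exact (hφ ⟨hz.1, hz.2.le.trans hm.2⟩ hm hz.2).le
  exact hle.trans_lt (hφ hm hy (by linarith [hy.1]))

/-- `f''` as given by the shrinker equation with `k = d - 1`, when `g = f'`. -/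
noncomputable def shrinkerRHS (k : ℝ) (f g : ℝ → ℝ) (y : ℝ) : ℝ :=
  -(k / y - y / 2) * g y + k / (2 * y ^ 2) * sin (2 * f y)

noncomputable def cubeMulDeriv (k : ℝ) (f g : ℝ → ℝ) (y : ℝ) : ℝ :=
  ((3 - k) * y ^ 2 + y ^ 4 / 2) * g y + k / 2 * y * sin (2 * f y)

section ShrinkerSolution

variable {k : ℝ} {f g : ℝ → ℝ} {y : ℝ}

theorem hasDerivAt_cube_mul (hg : HasDerivAt g (shrinkerRHS k f g y) y) :
    HasDerivAt (fun z => z ^ 3 * g z) (cubeMulDeriv k f g y) y := by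
  refine ((hasDerivAt_pow 3 y).mul hg).congr_deriv ?_
  simp only [cubeMulDeriv, shrinkerRHS]
  field_simp
  ring

theorem hasDerivAt_cubeMulDeriv (hy : y ≠ 0) (hf : HasDerivAt f (g y) y)
    (hg : HasDerivAt g (shrinkerRHS k f g y) y) :
    HasDerivAt (cubeMulDeriv k f g)
      (((4 - k) / y + y / 2) * cubeMulDeriv k f g y
        + y * g y * (2 * k - 6 + k * cos (2 * f y))) y := by
  have hA := ((hasDerivAt_pow 2 y).const_mul (3 - k)).fun_add ((hasDerivAt_pow 4 y).div_const 2)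
  have hB := ((hasDerivAt_id' y).const_mul (k / 2)).fun_mul (hf.const_mul 2).sin
  refine ((hA.fun_mul hg).fun_add hB).congr_deriv ?_
  simp only [cubeMulDeriv, shrinkerRHS]
  field_simp [hy]
  ring

theorem hasDerivAt_weight_mul_cubeMulDeriv (hy : 0 < y) (hf : HasDerivAt f (g y) y)
    (hg : HasDerivAt g (shrinkerRHS k f g y) y) :
    HasDerivAt (fun z => exp ((k - 4) * log z - z ^ 2 / 4) * cubeMulDeriv k f g z)
      (exp ((k - 4) * log y - y ^ 2 / 4) * (y * g y * (2 * k - 6 + k * cos (2 * f y)))) y := by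
  have hw := (((hasDerivAt_log hy.ne').const_mul (k - 4)).fun_sub
    ((hasDerivAt_pow 2 y).div_const 4)).exp
  refine (hw.fun_mul (hasDerivAt_cubeMulDeriv hy.ne' hf hg)).congr_deriv ?_
  field_simp [hy]
  ring

theorem tendsto_cubeMulDeriv_div_sq {a : ℝ} (hf0 : f 0 = 0)
    (hf : HasDerivWithinAt f a (Ioi 0) 0)
    (hg : Tendsto g (𝓝[>] 0) (𝓝 a)) :
    Tendsto (fun y => cubeMulDeriv k f g y / y ^ 2) (𝓝[>] 0) (𝓝 (3 * a)) := by
  have hsin : Tendsto (fun y => sin (2 * f y) / y) (𝓝[>] 0) (𝓝 (cos (2 * f 0) * (2 * a))) := by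
    refine ((hasDerivWithinAt_iff_tendsto_slope' (lt_irrefl 0)).1 (hf.const_mul 2).sin).congr' ?_
    filter_upwards with y
    simp [slope_def_field, hf0]
  have hpoly : Tendsto (fun y : ℝ => 3 - k + y ^ 2 / 2) (𝓝[>] 0) (𝓝 (3 - k + 0 ^ 2 / 2)) :=
    (Continuous.tendsto (by fun_prop) 0).mono_left nhdsWithin_le_nhds
  have hlim : (3 - k + 0 ^ 2 / 2) * a + k / 2 * (cos (2 * f 0) * (2 * a)) = 3 * a := by
    simp only [hf0, mul_zero, cos_zero]
    ring
  refine (hlim ▸ (hpoly.mul hg).add (hsin.const_mul (k / 2))).congr' ?_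
  filter_upwards [self_mem_nhdsWithin] with y (hy : 0 < y)
  simp only [cubeMulDeriv]
  field_simp

theorem eventually_cubeMulDeriv_pos {a : ℝ} (ha : 0 < a) (hf0 : f 0 = 0)
    (hf : HasDerivWithinAt f a (Ioi 0) 0) (hg : Tendsto g (𝓝[>] 0) (𝓝 a)) :
    ∀ᶠ y in 𝓝[>] 0, 0 < cubeMulDeriv k f g y := by
  filter_upwards [(tendsto_cubeMulDeriv_div_sq hf0 hf hg).eventually
    (eventually_gt_nhds (by positivity)), self_mem_nhdsWithin] with y hy hy0
  have : 0 < y ^ 2 := pow_pos hy0 2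
  exact (div_pos_iff_of_pos_right this).1 hy

theorem pos_of_cubeMulDeriv_pos {a c : ℝ}
    (hg : ∀ y, 0 < y → HasDerivAt g (shrinkerRHS k f g y) y) (hg0 : Tendsto g (𝓝[>] 0) (𝓝 a))
    (hE : ∀ y ∈ Ioo 0 c, 0 < cubeMulDeriv k f g y) :
    ∀ y ∈ Ioc 0 c, 0 < g y := by
  have hmono : StrictMonoOn (fun z => z ^ 3 * g z) (Ioc 0 c) := by
    refine strictMonoOn_of_deriv_pos (convex_Ioc 0 c) (fun z hz => ?_) fun z hz => ?_
    · exact (hasDerivAt_cube_mul (hg z hz.1)).continuousAt.continuousWithinAt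
    · rw [interior_Ioc] at hz
      rw [(hasDerivAt_cube_mul (hg z hz.1)).deriv]
      exact hE z hz
  have hlim : Tendsto (fun z => z ^ 3 * g z) (𝓝[>] 0) (𝓝 0) := by
    simpa using ((continuous_pow 3).tendsto 0).mono_left nhdsWithin_le_nhds |>.mul hg0
  intro y hy
  exact pos_of_mul_pos_right (hmono.pos_of_tendsto_nhdsGT hlim hy) (pow_pos hy.1 3).le

theorem monotoneOn_weight_mul_cubeMulDeriv {c : ℝ} (hk : 6 ≤ k)
    (hf : ∀ y, 0 < y → HasDerivAt f (g y) y)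
    (hg : ∀ y, 0 < y → HasDerivAt g (shrinkerRHS k f g y) y) (hgc : ∀ y ∈ Ioo 0 c, 0 ≤ g y) :
    MonotoneOn (fun z => exp ((k - 4) * log z - z ^ 2 / 4) * cubeMulDeriv k f g z) (Ioc 0 c) := by
  have hF z (hz : 0 < z) := hasDerivAt_weight_mul_cubeMulDeriv hz (hf z hz) (hg z hz)
  refine monotoneOn_of_deriv_nonneg (convex_Ioc 0 c) (fun z hz => ?_) (fun z hz => ?_)
    fun z hz => ?_
  · exact (hF z hz.1).continuousAt.continuousWithinAt
  · rw [interior_Ioc] at hz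
    exact (hF z hz.1).differentiableAt.differentiableWithinAt
  · rw [interior_Ioc] at hz
    rw [(hF z hz.1).deriv]
    have hcos := neg_one_le_cos (2 * f z)
    have := mul_nonneg hz.1.le (hgc z hz)
    have : 0 ≤ 2 * k - 6 + k * cos (2 * f z) := by nlinarith
    positivity

theorem cubeMulDeriv_pos {a y : ℝ} (hk : 6 ≤ k) (ha : 0 < a)
    (hf : ∀ y, 0 < y → HasDerivAt f (g y) y)
    (hg : ∀ y, 0 < y → HasDerivAt g (shrinkerRHS k f g y) y) (hf0 : f 0 = 0)
    (hf'0 : HasDerivWithinAt f a (Ioi 0) 0) (hg0 : Tendsto g (𝓝[>] 0) (𝓝 a)) (hy : 0 < y) :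
    0 < cubeMulDeriv k f g y := by
  by_contra! hEy
  have hEcont : ContinuousOn (cubeMulDeriv k f g) (Ioc 0 y) := fun z hz =>
    (hasDerivAt_cubeMulDeriv hz.1.ne' (hf z hz.1) (hg z hz.1)).continuousAt.continuousWithinAt
  obtain ⟨c, hc, hEc, hE⟩ := exists_first_nonpos hy hEcont
    (eventually_cubeMulDeriv_pos ha hf0 hf'0 hg0) hEy
  have hgc := pos_of_cubeMulDeriv_pos hg hg0 hE
  have hmono := monotoneOn_weight_mul_cubeMulDeriv hk hf hg fun z hz =>
    (hgc z (Ioo_subset_Ioc_self hz)).le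
  have hmid : c / 2 ∈ Ioo 0 c := ⟨half_pos hc.1, by linarith [hc.1]⟩
  have hle := hmono (Ioo_subset_Ioc_self hmid) ⟨hc.1, le_rfl⟩ hmid.2.le
  exact (hle.trans (mul_nonpos_of_nonneg_of_nonpos (exp_pos _).le hEc)).not_gt
    (mul_pos (exp_pos _) (hE _ hmid))

end ShrinkerSolution

/-- For `d ≥ 7` and a smooth solution `f` of the harmonic map shrinker equation on
`[0,∞)` with `f(0) = 0` and `f'(0) = a > 0`, the function `h(y) = y³ f'(y)` satisfies
`h'(y) > 0` for all `y > 0`. -/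
theorem h_deriv_positive (d : ℕ) (hd : 7 ≤ d) (a : ℝ) (ha : 0 < a) (f : ℝ → ℝ)
    (hf : ContDiffOn ℝ (⊤ : ℕ∞) f (Ici 0))
    (hode : ∀ y : ℝ, 0 < y →
      deriv (deriv f) y + (((d : ℝ) - 1) / y - y / 2) * deriv f y
        - ((d : ℝ) - 1) / (2 * y ^ 2) * Real.sin (2 * f y) = 0)
    (hf0 : f 0 = 0) (hf'0 : derivWithin f (Ici 0) 0 = a) :
    ∀ y : ℝ, 0 < y → 0 < deriv (fun z => z ^ 3 * deriv f z) y := by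
  have hk : (6 : ℝ) ≤ (d : ℝ) - 1 := by
    have : (7 : ℝ) ≤ d := by exact_mod_cast hd
    linarith
  have hf2 : ContDiffOn ℝ 2 f (Ioi 0) :=
    (hf.mono Ioi_subset_Ici_self).of_le (WithTop.coe_le_coe.2 le_top)
  have hfd : ∀ y, 0 < y → HasDerivAt f (deriv f y) y := fun y hy =>
    ((hf2.differentiableOn two_ne_zero y hy).differentiableAt (Ioi_mem_nhds hy)).hasDerivAt
  have hgd : ∀ y, 0 < y → HasDerivAt (deriv f) (shrinkerRHS ((d : ℝ) - 1) f (deriv f) y) y := by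
    intro y hy
    have h := (((hf2.deriv_of_isOpen isOpen_Ioi (m := 1) (by norm_num)).differentiableOn
      one_ne_zero y hy).differentiableAt (Ioi_mem_nhds hy)).hasDerivAt
    refine h.congr_deriv ?_
    simp only [shrinkerRHS]
    linear_combination hode y hy
  have hf'0' : HasDerivWithinAt f a (Ioi 0) 0 := by
    rw [← hf'0]
    exact (hf.differentiableOn (by simp) 0 self_mem_Ici).hasDerivWithinAt.mono
      Ioi_subset_Ici_self
  have hg0 : Tendsto (deriv f) (𝓝[>] 0) (𝓝 a) :=
    hf'0 ▸ tendsto_deriv_nhdsGT_of_contDiffOn_Ici (hf.of_le (by simp))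
  intro y hy
  rw [(hasDerivAt_cube_mul (hgd y hy)).deriv]
  exact cubeMulDeriv_pos hk ha hfd hgd hf0 hf'0' hg0 hy
end

section
/- Let d = 7 and let f : (0,∞) → ℝ be a smooth function satisfying f''(y) + ((d-1)/y - y/2) f'(y) - (d-1)/(2y²) sin(2 f(y)) = 0 for all y > 0, and set h(y) = y³ f'(y). Suppose y₀ > 0 is a point with h'(y₀) = 0 and f(y₀) = π/2. Then h''(y₀) = 0, h'''(y₀) = 0, and the fourth derivative satisfies h''''(y₀) = 24 y₀^{-8} h(y₀)³; in particular, if h(y₀) > 0 then h''''(y₀) > 0. -/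
open Real Set

/-!
Put `h = y³ f'`, `s = sin 2f`, `c = cos 2f`. The shrinker equation becomes the first-order system
`h' = (y/2 - 3/y) h + 3 y s`, `s' = 2 c h / y³`, `c' = -2 s h / y³`, so every derivative of `h` is
a rational expression in `y`, `h`, `s`, `c` and the lower derivatives of `h`. At `y₀` we have
`s = 0`, `c = -1` and `h' = 0`, which forces `(y₀² - 6) h(y₀) = 0` and hence `h''(y₀) = 0`.
In `h'''(y₀)` and `h''''(y₀)` the terms linear in `h(y₀)` cancel; all that survives in `h''''(y₀)`
is the cubic term `-12 s' h² / y⁵ = 24 h³ / y⁸` coming from `s' = 2 c h / y³`.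
-/

theorem hasDerivAt_div_pow {F : ℝ → ℝ} {F' y : ℝ} (hF : HasDerivAt F F' y) (n : ℕ) (hy : y ≠ 0) :
    HasDerivAt (fun z => F z / z ^ n) (F' / y ^ n - n * F y / y ^ (n + 1)) y := by
  refine (hF.fun_div (hasDerivAt_pow n y) (pow_ne_zero n hy)).congr_deriv ?_
  rcases n with _ | n
  · simp
  · field_simp; push_cast; ring

theorem hasDerivAt_half_sub_three_div {y : ℝ} (hy : y ≠ 0) :
    HasDerivAt (fun z => z / 2 - 3 / z) (1 / 2 + 3 / y ^ 2) y :=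
  ((hasDerivAt_id' y).div_const 2 |>.fun_sub <|
    (hasDerivAt_const y 3).fun_div (hasDerivAt_id' y) hy).congr_deriv (by field_simp; ring)

structure ShrinkerSystem (h s c : ℝ → ℝ) : Prop where
  hasDerivAt_h : ∀ y, 0 < y → HasDerivAt h ((y / 2 - 3 / y) * h y + 3 * y * s y) y
  hasDerivAt_s : ∀ y, 0 < y → HasDerivAt s (2 * c y * h y / y ^ 3) y
  hasDerivAt_c : ∀ y, 0 < y → HasDerivAt c (-(2 * s y * h y / y ^ 3)) y

namespace ShrinkerSystem

variable {h s c : ℝ → ℝ} {y : ℝ}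

noncomputable def jet1 (h s : ℝ → ℝ) (y : ℝ) : ℝ :=
  (y / 2 - 3 / y) * h y + 3 * y * s y

noncomputable def jet2 (h s c : ℝ → ℝ) (y : ℝ) : ℝ :=
  (1 / 2 + 3 / y ^ 2) * h y + (y / 2 - 3 / y) * jet1 h s y + 3 * s y + 6 * c y * h y / y ^ 2

noncomputable def jet3 (h s c : ℝ → ℝ) (y : ℝ) : ℝ :=
  -6 / y ^ 3 * h y + (1 + 6 / y ^ 2) * jet1 h s y + (y / 2 - 3 / y) * jet2 h s c y
    - 6 * c y * h y / y ^ 3 - 12 * s y * h y ^ 2 / y ^ 5 + 6 * c y * jet1 h s y / y ^ 2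

noncomputable def jet4 (h s c : ℝ → ℝ) (y : ℝ) : ℝ :=
  18 * (1 + c y) * h y / y ^ 4 - 24 * c y * h y ^ 3 / y ^ 8 + 72 * s y * h y ^ 2 / y ^ 6
    - 18 * (1 + c y) * jet1 h s y / y ^ 3 - 36 * s y * h y * jet1 h s y / y ^ 5
    + (3 / 2 + 9 / y ^ 2 + 6 * c y / y ^ 2) * jet2 h s c y + (y / 2 - 3 / y) * jet3 h s c y

variable (hsys : ShrinkerSystem h s c)
include hsys

theorem hasDerivAt_jet1 (hy : 0 < y) : HasDerivAt (jet1 h s) (jet2 h s c y) y := by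
  have := ((hasDerivAt_half_sub_three_div hy.ne').fun_mul (hsys.hasDerivAt_h y hy)).fun_add
    (((hasDerivAt_id' y).const_mul 3).fun_mul (hsys.hasDerivAt_s y hy))
  refine this.congr_deriv ?_
  simp only [jet2, jet1]; field_simp; ring

theorem hasDerivAt_jet2 (hy : 0 < y) : HasDerivAt (jet2 h s c) (jet3 h s c y) y := by
  have hh := hsys.hasDerivAt_h y hy
  have hs := hsys.hasDerivAt_s y hy
  have hc := hsys.hasDerivAt_c y hy
  have := ((hasDerivAt_const y (1 / 2 : ℝ)).fun_add
      (hasDerivAt_div_pow (hasDerivAt_const y 3) 2 hy.ne')).fun_mul hh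
    |>.fun_add ((hasDerivAt_half_sub_three_div hy.ne').fun_mul (hsys.hasDerivAt_jet1 hy))
    |>.fun_add (hs.const_mul 3)
    |>.fun_add (hasDerivAt_div_pow ((hc.const_mul 6).fun_mul hh) 2 hy.ne')
  refine this.congr_deriv ?_
  simp only [jet3, jet2, jet1]; field_simp; ring

theorem hasDerivAt_jet3 (hy : 0 < y) : HasDerivAt (jet3 h s c) (jet4 h s c y) y := by
  have hh := hsys.hasDerivAt_h y hy
  have hs := hsys.hasDerivAt_s y hy
  have hc := hsys.hasDerivAt_c y hy
  have h1 := hsys.hasDerivAt_jet1 hy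
  have := (hasDerivAt_div_pow (hasDerivAt_const y (-6 : ℝ)) 3 hy.ne').fun_mul hh
    |>.fun_add (((hasDerivAt_const y (1 : ℝ)).fun_add
      (hasDerivAt_div_pow (hasDerivAt_const y 6) 2 hy.ne')).fun_mul h1)
    |>.fun_add ((hasDerivAt_half_sub_three_div hy.ne').fun_mul (hsys.hasDerivAt_jet2 hy))
    |>.fun_sub (hasDerivAt_div_pow ((hc.const_mul 6).fun_mul hh) 3 hy.ne')
    |>.fun_sub (hasDerivAt_div_pow ((hs.const_mul 12).fun_mul (hh.fun_pow 2)) 5 hy.ne')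
    |>.fun_add (hasDerivAt_div_pow ((hc.const_mul 6).fun_mul h1) 2 hy.ne')
  refine this.congr_deriv ?_
  simp only [jet4, jet3, jet2, jet1]; field_simp; ring

theorem eqOn_jet1 : EqOn (deriv h) (jet1 h s) (Ioi 0) :=
  fun y hy => (hsys.hasDerivAt_h y hy).deriv

theorem eqOn_jet2 : EqOn (deriv^[2] h) (jet2 h s c) (Ioi 0) :=
  fun _ hy => (hsys.eqOn_jet1.deriv isOpen_Ioi hy).trans (hsys.hasDerivAt_jet1 hy).deriv

theorem eqOn_jet3 : EqOn (deriv^[3] h) (jet3 h s c) (Ioi 0) :=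
  fun _ hy => (hsys.eqOn_jet2.deriv isOpen_Ioi hy).trans (hsys.hasDerivAt_jet2 hy).deriv

theorem eqOn_jet4 : EqOn (deriv^[4] h) (jet4 h s c) (Ioi 0) :=
  fun _ hy => (hsys.eqOn_jet3.deriv isOpen_Ioi hy).trans (hsys.hasDerivAt_jet3 hy).deriv

theorem iterate_deriv_eq_of_deriv_eq_zero (hy : 0 < y) (hcrit : deriv h y = 0) (hs : s y = 0)
    (hc : c y = -1) :
    deriv^[2] h y = 0 ∧ deriv^[3] h y = 0 ∧ deriv^[4] h y = 24 / y ^ 8 * h y ^ 3 := by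
  have h1 : jet1 h s y = 0 := hsys.eqOn_jet1 hy ▸ hcrit
  have key : (y ^ 2 - 6) * h y = 0 := by
    simp only [jet1, hs] at h1; field_simp at h1; linear_combination h1
  have h2 : jet2 h s c y = 0 := by
    simp only [jet2, h1, hs, hc]; field_simp; linear_combination key
  have h3 : jet3 h s c y = 0 := by
    simp only [jet3, h1, h2, hs, hc]; field_simp; ring
  refine ⟨hsys.eqOn_jet2 hy ▸ h2, hsys.eqOn_jet3 hy ▸ h3, ?_⟩
  rw [hsys.eqOn_jet4 hy]
  simp only [jet4, h1, h2, h3, hs, hc]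
  field_simp
  ring

end ShrinkerSystem

theorem shrinkerSystem_of_ode {f : ℝ → ℝ} (hf : ContDiffOn ℝ 2 f (Ioi 0))
    (hode : ∀ y : ℝ, 0 < y →
      deriv (deriv f) y + (6 / y - y / 2) * deriv f y - 6 / (2 * y ^ 2) * sin (2 * f y) = 0) :
    ShrinkerSystem (fun z => z ^ 3 * deriv f z) (fun z => sin (2 * f z))
      (fun z => cos (2 * f z)) := by
  have hf₁ : ∀ y, 0 < y → HasDerivAt f (deriv f y) y := fun y hy =>
    ((hf.differentiableOn (by norm_num)).differentiableAt (Ioi_mem_nhds hy)).hasDerivAt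
  have hf₂ : ∀ y, 0 < y → HasDerivAt (deriv f) (deriv (deriv f) y) y := fun y hy =>
    (((hf.deriv_of_isOpen (m := 1) isOpen_Ioi (by norm_num)).differentiableOn
      one_ne_zero).differentiableAt (Ioi_mem_nhds hy)).hasDerivAt
  refine ⟨fun y hy => ?_, fun y hy => ?_, fun y hy => ?_⟩
  · have hf'' : deriv (deriv f) y = (y / 2 - 6 / y) * deriv f y + 3 / y ^ 2 * sin (2 * f y) := by
      linear_combination hode y hy
    refine ((hasDerivAt_pow 3 y).fun_mul (hf₂ y hy)).congr_deriv ?_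
    rw [hf'']
    field_simp
    ring
  · refine ((hf₁ y hy).const_mul 2).sin.congr_deriv ?_
    field_simp
  · refine ((hf₁ y hy).const_mul 2).cos.congr_deriv ?_
    field_simp

/-- In dimension `d = 7`, if `f` is a smooth solution of the harmonic map shrinker equation
on `(0,∞)`, `h(y) = y³ f'(y)`, and `y₀ > 0` is a point with `h'(y₀) = 0` and `f(y₀) = π/2`,
then `h''(y₀) = h'''(y₀) = 0` and `h''''(y₀) = 24 y₀⁻⁸ h(y₀)³`; in particular
`h(y₀) > 0` implies `h''''(y₀) > 0`. (Here `d = 7`, so `d - 1 = 6`.) -/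
theorem critical_point_fourth_derivative (f : ℝ → ℝ)
    (hf : ContDiffOn ℝ (⊤ : ℕ∞) f (Ioi 0))
    (hode : ∀ y : ℝ, 0 < y →
      deriv (deriv f) y + ((6 : ℝ) / y - y / 2) * deriv f y
        - (6 : ℝ) / (2 * y ^ 2) * Real.sin (2 * f y) = 0)
    (y₀ : ℝ) (hy₀ : 0 < y₀)
    (hh' : deriv (fun z => z ^ 3 * deriv f z) y₀ = 0)
    (hfy₀ : f y₀ = Real.pi / 2) :
    deriv (deriv (fun z => z ^ 3 * deriv f z)) y₀ = 0 ∧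
    deriv (deriv (deriv (fun z => z ^ 3 * deriv f z))) y₀ = 0 ∧
    deriv (deriv (deriv (deriv (fun z => z ^ 3 * deriv f z)))) y₀ =
      24 / y₀ ^ 8 * (y₀ ^ 3 * deriv f y₀) ^ 3 ∧
    (0 < y₀ ^ 3 * deriv f y₀ →
      0 < deriv (deriv (deriv (deriv (fun z => z ^ 3 * deriv f z)))) y₀) := by
  have hsys := shrinkerSystem_of_ode (hf.of_le (WithTop.coe_le_coe.mpr le_top)) hode
  have h2f : 2 * f y₀ = π := by rw [hfy₀]; ring
  obtain ⟨h2, h3, h4⟩ := hsys.iterate_deriv_eq_of_deriv_eq_zero hy₀ hh'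
    (by simp only [h2f, sin_pi]) (by simp only [h2f, cos_pi])
  exact ⟨h2, h3, h4, fun hpos =>
    lt_of_lt_of_eq (mul_pos (by positivity) (pow_pos hpos 3)) h4.symm⟩
end

section
/- Let d be an integer with d ≥ 3 and let f : [0,∞) → ℝ be a smooth function satisfying the shrinker equation f''(y) + ((d-1)/y - y/2) f'(y) - (d-1)/(2y²) sin(2 f(y)) = 0 for all y > 0 with f(0) = 0. If f' is bounded on [1,∞), then ∫₀^∞ s^{d-3} e^{-s²/4} sin(2 f(s)) ds = 0, i.e. A(y) → 0 as y → ∞, where A(y) = ∫₀^y s^{d-3} e^{-s²/4} sin(2 f(s)) ds. -/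
open Real Set Filter Topology MeasureTheory intervalIntegral

/-!
In divergence form the shrinker equation reads
`(y^{d-1} e^{-y²/4} f')' = ((d-1)/2) y^{d-3} e^{-y²/4} sin 2f`, hence
`A(y) = (2/(d-1)) y^{d-1} e^{-y²/4} f'(y)` (the boundary term at `0` vanishes because `f'` is
continuous there). Boundedness of `f'` and Gaussian decay of the weight then force `A(y) → 0`,
and the integrand is integrable on `(0, ∞)`, so its integral is the limit of `A`.
-/

noncomputable def gaussWeight (m : ℕ) (y : ℝ) : ℝ := y ^ m * exp (-y ^ 2 / 4)

lemma continuous_gaussWeight (m : ℕ) : Continuous (gaussWeight m) := by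
  unfold gaussWeight; fun_prop

lemma gaussWeight_apply_zero (m : ℕ) (hm : m ≠ 0) : gaussWeight m 0 = 0 := by
  simp [gaussWeight, hm]

lemma integrableOn_gaussWeight (m : ℕ) : IntegrableOn (gaussWeight m) (Ioi 0) := by
  have h := integrableOn_rpow_mul_exp_neg_mul_sq (b := 1 / 4) (by norm_num)
    (s := m) (by linarith [(Nat.cast_nonneg m : (0 : ℝ) ≤ m)])
  refine h.congr_fun (fun y _ => ?_) measurableSet_Ioi
  simp only [gaussWeight, rpow_natCast]
  ring_nf

lemma tendsto_gaussWeight_atTop (m : ℕ) : Tendsto (gaussWeight m) atTop (𝓝 0) := by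
  refine tendsto_of_tendsto_of_tendsto_of_le_of_le' tendsto_const_nhds
    (tendsto_pow_mul_exp_neg_atTop_nhds_zero m) ?_ ?_
  · filter_upwards [eventually_ge_atTop 0] with y hy
    unfold gaussWeight; positivity
  · filter_upwards [eventually_ge_atTop 4] with y hy
    have : exp (-y ^ 2 / 4) ≤ exp (-y) := exp_le_exp.mpr (by nlinarith)
    unfold gaussWeight; gcongr

lemma hasDerivAt_gaussWeight_mul (m : ℕ) {u : ℝ → ℝ} {u' y : ℝ} (hy : y ≠ 0)
    (hu : HasDerivAt u u' y) :
    HasDerivAt (fun y => gaussWeight m y * u y)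
      (gaussWeight m y * (u' + (m / y - y / 2) * u y)) y := by
  have hexp :
      HasDerivAt (fun y : ℝ => exp (-y ^ 2 / 4)) (exp (-y ^ 2 / 4) * (-(2 * y) / 4)) y := by
    simpa using ((hasDerivAt_pow 2 y).neg.div_const 4).exp
  refine (((hasDerivAt_pow m y).mul hexp).mul hu).congr_deriv ?_
  rcases m with _ | m
  · simp only [gaussWeight, Pi.mul_apply, Nat.cast_zero, zero_mul, zero_div]
    ring
  · simp only [gaussWeight, Pi.mul_apply, Nat.add_sub_cancel, pow_succ]
    field_simp
    push_cast
    ring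

section Shrinker

variable {d : ℕ} {f : ℝ → ℝ}

lemma hasDerivAt_gaussWeight_mul_deriv_of_shrinker (hd : 3 ≤ d) {y : ℝ} (hy : 0 < y)
    (hf' : HasDerivAt (deriv f) (deriv (deriv f) y) y)
    (hode : deriv (deriv f) y + (((d : ℝ) - 1) / y - y / 2) * deriv f y
        - ((d : ℝ) - 1) / (2 * y ^ 2) * sin (2 * f y) = 0) :
    HasDerivAt (fun y => gaussWeight (d - 1) y * deriv f y)
      (((d : ℝ) - 1) / 2 * (gaussWeight (d - 3) y * sin (2 * f y))) y := by
  refine (hasDerivAt_gaussWeight_mul (d - 1) hy.ne' hf').congr_deriv ?_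
  have hode' : deriv (deriv f) y + (((d : ℝ) - 1) / y - y / 2) * deriv f y
      = ((d : ℝ) - 1) / (2 * y ^ 2) * sin (2 * f y) := by linarith
  obtain ⟨n, rfl⟩ : ∃ n, d = n + 3 := ⟨d - 3, by omega⟩
  have hpred : n + 3 - 1 = n + 2 := by omega
  simp only [hpred, Nat.add_sub_cancel, gaussWeight]
  push_cast at hode' ⊢
  rw [show ((n : ℝ) + 2) = (n : ℝ) + 3 - 1 by ring, hode']
  field_simp
  ring

lemma integral_gaussWeight_mul_sin_eq_of_shrinker (hd : 3 ≤ d)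
    (hf : ContDiffOn ℝ 2 f (Ici 0))
    (hode : ∀ y : ℝ, 0 < y →
      deriv (deriv f) y + (((d : ℝ) - 1) / y - y / 2) * deriv f y
        - ((d : ℝ) - 1) / (2 * y ^ 2) * sin (2 * f y) = 0)
    {y : ℝ} (hy : 0 < y) :
    ∫ s in (0 : ℝ)..y, gaussWeight (d - 3) s * sin (2 * f s)
      = 2 / ((d : ℝ) - 1) * (gaussWeight (d - 1) y * deriv f y) := by
  have hderivWithin : ∀ s : ℝ, 0 < s → derivWithin f (Ici 0) s = deriv f s :=
    fun s hs => derivWithin_of_mem_nhds (Ici_mem_nhds hs)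
  have hf'' : ∀ s : ℝ, 0 < s → HasDerivAt (deriv f) (deriv (deriv f) s) s := by
    have h := ((hf.mono Ioi_subset_Ici_self).deriv_of_isOpen isOpen_Ioi (m := 1)
      (by norm_num)).differentiableOn (by norm_num)
    exact fun s hs => (h.differentiableAt (Ioi_mem_nhds hs)).hasDerivAt
  -- Using `derivWithin` on `[0, ∞)` makes the flux continuous up to `0`, where it vanishes.
  have hFTC : ∫ s in (0 : ℝ)..y, ((d : ℝ) - 1) / 2 * (gaussWeight (d - 3) s * sin (2 * f s))
      = gaussWeight (d - 1) y * derivWithin f (Ici 0) y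
        - gaussWeight (d - 1) 0 * derivWithin f (Ici 0) 0 := by
    apply integral_eq_sub_of_hasDerivAt_of_le hy.le
    · exact (continuous_gaussWeight _).continuousOn.mul
        ((hf.continuousOn_derivWithin (uniqueDiffOn_Ici 0) (by norm_num)).mono
          Icc_subset_Ici_self)
    · intro s hs
      refine (hasDerivAt_gaussWeight_mul_deriv_of_shrinker hd hs.1 (hf'' s hs.1)
        (hode s hs.1)).congr_of_eventuallyEq ?_
      filter_upwards [Ioi_mem_nhds hs.1] with t ht
      rw [hderivWithin t ht]
    · refine ContinuousOn.intervalIntegrable (ContinuousOn.mono ?_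
        (uIcc_of_le hy.le ▸ Icc_subset_Ici_self))
      exact continuousOn_const.mul ((continuous_gaussWeight _).continuousOn.mul
        (continuous_sin.comp_continuousOn (continuousOn_const.mul hf.continuousOn)))
  have hd1 : (0 : ℝ) < d - 1 := by
    have : (3 : ℝ) ≤ d := by exact_mod_cast hd
    linarith
  rw [intervalIntegral.integral_const_mul, gaussWeight_apply_zero _ (by omega), zero_mul,
    sub_zero, hderivWithin y hy] at hFTC
  rw [← hFTC]
  field_simp

end Shrinker

theorem A_tendsto_zero_general (d : ℕ) (hd : 3 ≤ d) (f : ℝ → ℝ)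
    (hf : ContDiffOn ℝ (⊤ : ℕ∞) f (Ici 0))
    (hode : ∀ y : ℝ, 0 < y →
      deriv (deriv f) y + (((d : ℝ) - 1) / y - y / 2) * deriv f y
        - ((d : ℝ) - 1) / (2 * y ^ 2) * Real.sin (2 * f y) = 0)
    (hbdd : ∃ M : ℝ, ∀ y : ℝ, 1 ≤ y → |deriv f y| ≤ M) :
    (∫ s in Ioi (0 : ℝ), s ^ (d - 3) * Real.exp (-s ^ 2 / 4) * Real.sin (2 * f s)) = 0 ∧
    Tendsto (fun y => ∫ s in (0 : ℝ)..y,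
        s ^ (d - 3) * Real.exp (-s ^ 2 / 4) * Real.sin (2 * f s))
      atTop (𝓝 0) := by
  obtain ⟨M, hM⟩ := hbdd
  have hf2 : ContDiffOn ℝ 2 f (Ici 0) := hf.of_le (WithTop.coe_le_coe.mpr le_top)
  change (∫ s in Ioi (0 : ℝ), gaussWeight (d - 3) s * sin (2 * f s)) = 0 ∧
    Tendsto (fun y => ∫ s in (0 : ℝ)..y, gaussWeight (d - 3) s * sin (2 * f s)) atTop (𝓝 0)
  have hA : (fun y => 2 / ((d : ℝ) - 1) * (gaussWeight (d - 1) y * deriv f y)) =ᶠ[atTop]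
      fun y => ∫ s in (0 : ℝ)..y, gaussWeight (d - 3) s * sin (2 * f s) := by
    filter_upwards [eventually_gt_atTop 0] with y hy
    exact (integral_gaussWeight_mul_sin_eq_of_shrinker hd hf2 hode hy).symm
  have hf'_bdd : IsBoundedUnder (· ≤ ·) atTop (fun y => ‖deriv f y‖) :=
    isBoundedUnder_of_eventually_le (a := M) (eventually_ge_atTop 1 |>.mono hM)
  have hlim : Tendsto (fun y => ∫ s in (0 : ℝ)..y, gaussWeight (d - 3) s * sin (2 * f s))
      atTop (𝓝 0) := by
    simpa using (((tendsto_gaussWeight_atTop (d - 1)).zero_mul_isBoundedUnder_le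
      hf'_bdd).const_mul (2 / ((d : ℝ) - 1))).congr' hA
  have hint : IntegrableOn (fun s => gaussWeight (d - 3) s * sin (2 * f s)) (Ioi 0) :=
    (integrableOn_gaussWeight (d - 3)).mul_bdd
      ((continuous_sin.comp_continuousOn ((continuousOn_const.mul hf.continuousOn).mono
        Ioi_subset_Ici_self)).aestronglyMeasurable measurableSet_Ioi)
      (Eventually.of_forall fun s => abs_sin_le_one _)
  exact ⟨tendsto_nhds_unique (intervalIntegral_tendsto_integral_Ioi 0 hint tendsto_id) hlim,
    hlim⟩

/-- If `f` solves the harmonic map shrinker equation on `[0,∞)` with `f(0) = 0` and `f'`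
is bounded on `[1,∞)`, then `∫₀^∞ s^{d-3} e^{-s²/4} sin(2 f(s)) ds = 0`, i.e.
`A(y) = ∫₀^y s^{d-3} e^{-s²/4} sin(2 f(s)) ds → 0` as `y → ∞`. -/
theorem A_tendsto_zero (d : ℕ) (hd : 3 ≤ d) (f : ℝ → ℝ)
    (hf : ContDiffOn ℝ (⊤ : ℕ∞) f (Ici 0))
    (hode : ∀ y : ℝ, 0 < y →
      deriv (deriv f) y + (((d : ℝ) - 1) / y - y / 2) * deriv f y
        - ((d : ℝ) - 1) / (2 * y ^ 2) * Real.sin (2 * f y) = 0)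
    (hf0 : f 0 = 0)
    (hbdd : ∃ M : ℝ, ∀ y : ℝ, 1 ≤ y → |deriv f y| ≤ M) :
    (∫ s in Ioi (0 : ℝ), s ^ (d - 3) * Real.exp (-s ^ 2 / 4) * Real.sin (2 * f s)) = 0 ∧
    Tendsto (fun y => ∫ s in (0 : ℝ)..y,
        s ^ (d - 3) * Real.exp (-s ^ 2 / 4) * Real.sin (2 * f s))
      atTop (𝓝 0) :=
  A_tendsto_zero_general d hd f hf hode hbdd
end

section
/- Let d be an integer with d ≥ 3 and let f : [0,∞) → ℝ be a smooth function satisfying the shrinker equation f''(y) + ((d-1)/y - y/2) f'(y) - (d-1)/(2y²) sin(2 f(y)) = 0 for all y > 0 with f(0) = 0. If f' is bounded on [1,∞) and f(y) converges to a limit b as y → ∞, then lim_{y→∞} y³ f'(y) = -(d-1) sin(2b). -/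
open Real Set Filter Topology Asymptotics

/-! With the Gaussian integrating factor `w(y) = y^(d-1) e^(-y²/4)` the shrinker equation reads
`(w f')' = w · (d-1)/(2y²) · sin 2f`. Both `w f'` and `w / y³` tend to `0` (`f'` is bounded and
`w` decays like a Gaussian), so L'Hôpital's rule applies to their quotient `y³ f'`; the quotient of
the derivatives is `(d-1)/2 · sin 2f / ((d-4)/y² - 1/2) → -(d-1) sin 2b`. -/

noncomputable def shrinkerWeight (c y : ℝ) : ℝ := y ^ c * exp (-(y ^ 2 / 4))

lemma shrinkerWeight_pos (c : ℝ) {y : ℝ} (hy : 0 < y) : 0 < shrinkerWeight c y := by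
  unfold shrinkerWeight; positivity

lemma hasDerivAt_shrinkerWeight (c : ℝ) {y : ℝ} (hy : 0 < y) :
    HasDerivAt (shrinkerWeight c) ((c / y - y / 2) * shrinkerWeight c y) y := by
  have hpow := hasDerivAt_rpow_const (p := c) (Or.inl hy.ne')
  have hexp := (((hasDerivAt_pow 2 y).div_const 4).neg).exp
  simp only [Pi.neg_apply] at hexp
  refine (hpow.mul hexp).congr_deriv ?_
  rw [shrinkerWeight, rpow_sub_one hy.ne']
  field_simp
  ring

lemma tendsto_shrinkerWeight_atTop (c : ℝ) : Tendsto (shrinkerWeight c) atTop (𝓝 0) := by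
  refine squeeze_zero' ?_ ?_ (tendsto_rpow_mul_exp_neg_mul_atTop_nhds_zero c 1 one_pos)
  · filter_upwards [eventually_gt_atTop 0] with y hy using (shrinkerWeight_pos c hy).le
  · filter_upwards [eventually_ge_atTop 4] with y hy
    have : -(y ^ 2 / 4) ≤ -1 * y := by nlinarith
    exact mul_le_mul_of_nonneg_left (exp_le_exp.mpr this) (by positivity)

theorem tendsto_cube_mul_atTop_of_linear_ode {c L : ℝ} {u u' : ℝ → ℝ}
    (hu : ∀ᶠ y in atTop, HasDerivAt u (u' y) y) (hbdd : u =O[atTop] fun _ => (1 : ℝ))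
    (hL : Tendsto (fun y => y ^ 2 * (u' y + (c / y - y / 2) * u y)) atTop (𝓝 L)) :
    Tendsto (fun y => y ^ 3 * u y) atTop (𝓝 (-2 * L)) := by
  set w := shrinkerWeight c
  have hw : ∀ y, 0 < y → 0 < w y := fun y hy => shrinkerWeight_pos c hy
  set D : ℝ → ℝ := fun y => (c - 3) / y ^ 2 - 1 / 2
  have hD : Tendsto D atTop (𝓝 (0 - 1 / 2)) :=
    (tendsto_const_nhds.div_atTop (tendsto_pow_atTop two_ne_zero)).sub_const _
  have hF : ∀ᶠ y in atTop,
      HasDerivAt (fun y => w y * u y) (w y * (u' y + (c / y - y / 2) * u y)) y := by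
    filter_upwards [hu, eventually_gt_atTop 0] with y hu hy
    exact ((hasDerivAt_shrinkerWeight c hy).mul hu).congr_deriv (by ring)
  have hG : ∀ᶠ y in atTop, HasDerivAt (fun y => w y / y ^ 3) (w y / y ^ 2 * D y) y := by
    filter_upwards [eventually_gt_atTop 0] with y hy
    refine ((hasDerivAt_shrinkerWeight c hy).div (hasDerivAt_pow 3 y)
      (by positivity)).congr_deriv ?_
    simp only [D]
    field_simp
    ring
  have hG'_ne : ∀ᶠ y in atTop, w y / y ^ 2 * D y ≠ 0 := by
    filter_upwards [eventually_gt_atTop 0,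
      hD.eventually_ne (by norm_num : (0 : ℝ) - 1 / 2 ≠ 0)] with y hy hDy
    exact mul_ne_zero (div_pos (hw y hy) (by positivity)).ne' hDy
  have hFlim : Tendsto (fun y => w y * u y) atTop (𝓝 0) := by
    refine ((isBigO_refl w atTop).mul hbdd).trans_tendsto ?_
    simpa using tendsto_shrinkerWeight_atTop c
  have hGlim : Tendsto (fun y => w y / y ^ 3) atTop (𝓝 0) :=
    (tendsto_shrinkerWeight_atTop c).div_atTop (tendsto_pow_atTop three_ne_zero)
  have hratio : Tendsto (fun y => w y * (u' y + (c / y - y / 2) * u y) / (w y / y ^ 2 * D y))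
      atTop (𝓝 (L / (0 - 1 / 2))) := by
    refine (hL.div hD (by norm_num)).congr' ?_
    filter_upwards [eventually_gt_atTop 0] with y hy
    have := hw y hy
    simp only [Pi.div_apply]
    field_simp
  rw [show L / (0 - 1 / 2) = -2 * L by ring] at hratio
  refine (HasDerivAt.lhopital_zero_atTop hF hG hG'_ne hFlim hGlim hratio).congr' ?_
  filter_upwards [eventually_gt_atTop 0] with y hy
  have := hw y hy
  field_simp

lemma hasDerivAt_deriv_of_contDiffOn_Ici {f : ℝ → ℝ} {a y : ℝ}
    (hf : ContDiffOn ℝ 2 f (Ici a)) (hy : a < y) :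
    HasDerivAt (deriv f) (deriv (deriv f) y) y := by
  have hf' : ContDiffOn ℝ 1 (deriv f) (Ioi a) :=
    (hf.mono Ioi_subset_Ici_self).deriv_of_isOpen isOpen_Ioi (by norm_num)
  exact ((hf'.contDiffAt (Ioi_mem_nhds hy)).differentiableAt one_ne_zero).hasDerivAt

theorem asymptotic_decay_general (d : ℕ) (f : ℝ → ℝ) (b : ℝ)
    (hf : ContDiffOn ℝ (⊤ : ℕ∞) f (Ici 0))
    (hode : ∀ y : ℝ, 0 < y →
      deriv (deriv f) y + (((d : ℝ) - 1) / y - y / 2) * deriv f y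
        - ((d : ℝ) - 1) / (2 * y ^ 2) * Real.sin (2 * f y) = 0)
    (hbdd : ∃ M : ℝ, ∀ y : ℝ, 1 ≤ y → |deriv f y| ≤ M)
    (hlim : Tendsto f atTop (𝓝 b)) :
    Tendsto (fun y => y ^ 3 * deriv f y) atTop
      (𝓝 (-((d : ℝ) - 1) * Real.sin (2 * b))) := by
  obtain ⟨M, hM⟩ := hbdd
  have hf2 : ContDiffOn ℝ 2 f (Ici 0) := hf.of_le (WithTop.coe_le_coe.mpr le_top)
  have hderiv : ∀ᶠ y in atTop, HasDerivAt (deriv f) (deriv (deriv f) y) y :=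
    eventually_gt_atTop 0 |>.mono fun y hy => hasDerivAt_deriv_of_contDiffOn_Ici hf2 hy
  have hO : deriv f =O[atTop] fun _ => (1 : ℝ) :=
    .of_bound M (eventually_ge_atTop 1 |>.mono fun y hy => by simpa using hM y hy)
  have hforcing : Tendsto (fun y => y ^ 2 * (deriv (deriv f) y
      + (((d : ℝ) - 1) / y - y / 2) * deriv f y)) atTop
      (𝓝 (((d : ℝ) - 1) / 2 * Real.sin (2 * b))) := by
    refine ((continuous_sin.tendsto _).comp (hlim.const_mul 2)).const_mul _ |>.congr' ?_
    filter_upwards [eventually_gt_atTop 0] with y hy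
    rw [show deriv (deriv f) y + (((d : ℝ) - 1) / y - y / 2) * deriv f y
        = ((d : ℝ) - 1) / (2 * y ^ 2) * sin (2 * f y) by linarith [hode y hy]]
    simp only [Function.comp_apply]
    field_simp
  simpa [← mul_assoc, mul_div_cancel₀] using
    tendsto_cube_mul_atTop_of_linear_ode hderiv hO hforcing

/-- If `f` solves the harmonic map shrinker equation on `[0,∞)` with `f(0) = 0`, `f'` is
bounded on `[1,∞)`, and `f(y) → b` as `y → ∞`, then `y³ f'(y) → -(d-1) sin(2b)`. -/
theorem asymptotic_decay (d : ℕ) (hd : 3 ≤ d) (f : ℝ → ℝ) (b : ℝ)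
    (hf : ContDiffOn ℝ (⊤ : ℕ∞) f (Ici 0))
    (hode : ∀ y : ℝ, 0 < y →
      deriv (deriv f) y + (((d : ℝ) - 1) / y - y / 2) * deriv f y
        - ((d : ℝ) - 1) / (2 * y ^ 2) * Real.sin (2 * f y) = 0)
    (hf0 : f 0 = 0)
    (hbdd : ∃ M : ℝ, ∀ y : ℝ, 1 ≤ y → |deriv f y| ≤ M)
    (hlim : Tendsto f atTop (𝓝 b)) :
    Tendsto (fun y => y ^ 3 * deriv f y) atTop
      (𝓝 (-((d : ℝ) - 1) * Real.sin (2 * b))) :=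
  asymptotic_decay_general d f b hf hode hbdd hlim
end

section
/- Let d be an integer with d ≥ 3 and let g : (0,∞) → ℝ be a twice continuously differentiable function satisfying g''(y) + ((d-3)/y - y/2) g'(y) - (d-2)/y² · g(y)(g(y)-1)(g(y)-2) = 0 for all y > 0. Then the function h(y) = y³ g'(y) satisfies the second-order linear equation y² h''(y) = α(y) h'(y) + β(y) h(y) for all y > 0, where α(y) = (1/2) y (y² - 2d + 14) and β(y) = d - 10 + 3(d-2)(1 - g(y))². -/
open Real Set Filter Topology

/-!
Differentiating `h = y³ g'` once and eliminating `g''` with the shrinker equation expresses `h'`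
through `g` and `g'` alone. Differentiating that expression again and eliminating `g''` a second
time leaves an identity in `y, g, g'`, which is the claimed equation once `g'` is written as
`h / y³`. The coefficient `β` comes from the derivative `3 (1 - x)² - 1` of the nonlinearity
`x (x - 1) (x - 2)`.
-/

namespace YangMillsShrinker

def cubic (x : ℝ) : ℝ := x * (x - 1) * (x - 2)

def IsShrinkerAt (d : ℝ) (g : ℝ → ℝ) (y : ℝ) : Prop :=
  deriv (deriv g) y + ((d - 3) / y - y / 2) * deriv g y - (d - 2) / y ^ 2 * cubic (g y) = 0

lemma hasDerivAt_cubic_comp {g : ℝ → ℝ} {g' y : ℝ} (hg : HasDerivAt g g' y) :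
    HasDerivAt (fun z => cubic (g z)) ((3 * (1 - g y) ^ 2 - 1) * g') y := by
  have : HasDerivAt (fun z => g z * (g z - 1) * (g z - 2))
      ((g' * (g y - 1) + g y * g') * (g y - 2) + g y * (g y - 1) * g') y :=
    (hg.mul (hg.sub_const 1)).mul (hg.sub_const 2)
  exact this.congr_deriv (by ring)

/-- The value of `(y³ g')'` along a solution of the shrinker equation in dimension `d`. -/
noncomputable def derivCubeMulDeriv (d : ℝ) (g : ℝ → ℝ) (y : ℝ) : ℝ :=
  ((6 - d) * y ^ 2 + y ^ 4 / 2) * deriv g y + (d - 2) * y * cubic (g y)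

section

variable {d : ℝ} {g : ℝ → ℝ} {y : ℝ}

lemma IsShrinkerAt.deriv_deriv_eq (hode : IsShrinkerAt d g y) :
    deriv (deriv g) y = (y / 2 - (d - 3) / y) * deriv g y + (d - 2) / y ^ 2 * cubic (g y) := by
  unfold IsShrinkerAt at hode
  linear_combination hode

lemma IsShrinkerAt.deriv_cube_mul_deriv (hode : IsShrinkerAt d g y)
    (hg' : DifferentiableAt ℝ (deriv g) y) :
    deriv (fun z => z ^ 3 * deriv g z) y = derivCubeMulDeriv d g y := by
  have hprod : HasDerivAt (fun z => z ^ 3 * deriv g z)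
      ((3 : ℕ) * y ^ (3 - 1) * deriv g y + y ^ 3 * deriv (deriv g) y) y :=
    (hasDerivAt_pow 3 y).mul hg'.hasDerivAt
  rw [hprod.deriv, hode.deriv_deriv_eq, derivCubeMulDeriv]
  field_simp
  ring

lemma hasDerivAt_derivCubeMulDeriv (hg : DifferentiableAt ℝ g y)
    (hg' : DifferentiableAt ℝ (deriv g) y) :
    HasDerivAt (derivCubeMulDeriv d g)
      (((6 - d) * (2 * y) + 2 * y ^ 3) * deriv g y
        + ((6 - d) * y ^ 2 + y ^ 4 / 2) * deriv (deriv g) y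
        + (d - 2) * cubic (g y)
        + (d - 2) * y * ((3 * (1 - g y) ^ 2 - 1) * deriv g y)) y := by
  have hpoly : HasDerivAt (fun z : ℝ => (6 - d) * z ^ 2 + z ^ 4 / 2)
      ((6 - d) * (2 * y) + 2 * y ^ 3) y := by
    have := ((hasDerivAt_pow 2 y).const_mul (6 - d)).add ((hasDerivAt_pow 4 y).div_const 2)
    exact this.congr_deriv (by ring)
  have hlin : HasDerivAt (fun z : ℝ => (d - 2) * z) (d - 2) y := by
    simpa using (hasDerivAt_id y).const_mul (d - 2)
  have := (hpoly.mul hg'.hasDerivAt).add (hlin.mul (hasDerivAt_cubic_comp hg.hasDerivAt))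
  exact this.congr_deriv (by ring)

end

lemma differentiableAt_deriv_of_contDiffOn_two {g : ℝ → ℝ} {s : Set ℝ} (hs : IsOpen s)
    (hg : ContDiffOn ℝ 2 g s) {y : ℝ} (hy : y ∈ s) :
    DifferentiableAt ℝ (deriv g) y := by
  have hg' : ContDiffOn ℝ 1 (deriv g) s := hg.deriv_of_isOpen hs (by norm_num)
  exact (hg'.differentiableOn one_ne_zero).differentiableAt (hs.mem_nhds hy)

end YangMillsShrinker

open YangMillsShrinker in
theorem h_equation_yang_mills_general (d : ℕ) (g : ℝ → ℝ)
    (hg : ContDiffOn ℝ 2 g (Ioi 0))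
    (hode : ∀ y : ℝ, 0 < y →
      deriv (deriv g) y + (((d : ℝ) - 3) / y - y / 2) * deriv g y
        - ((d : ℝ) - 2) / y ^ 2 * (g y * (g y - 1) * (g y - 2)) = 0) :
    ∀ y : ℝ, 0 < y →
      y ^ 2 * deriv (deriv (fun z => z ^ 3 * deriv g z)) y =
        1 / 2 * y * (y ^ 2 - 2 * (d : ℝ) + 14) *
            deriv (fun z => z ^ 3 * deriv g z) y +
          ((d : ℝ) - 10 + 3 * ((d : ℝ) - 2) * (1 - g y) ^ 2) *
            (y ^ 3 * deriv g y) := by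
  have hg' : ∀ y : ℝ, 0 < y → DifferentiableAt ℝ (deriv g) y := fun y hy =>
    differentiableAt_deriv_of_contDiffOn_two isOpen_Ioi hg hy
  have hshrinker : ∀ y : ℝ, 0 < y → IsShrinkerAt d g y := hode
  have hderiv : ∀ y : ℝ, 0 < y →
      deriv (fun z => z ^ 3 * deriv g z) y = derivCubeMulDeriv d g y := fun y hy =>
    (hshrinker y hy).deriv_cube_mul_deriv (hg' y hy)
  intro y hy
  have hderiv2 :
      deriv (deriv (fun z => z ^ 3 * deriv g z)) y = deriv (derivCubeMulDeriv d g) y :=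
    Filter.EventuallyEq.deriv_eq (eventually_of_mem (Ioi_mem_nhds hy) hderiv)
  have hgy : DifferentiableAt ℝ g y :=
    (hg.differentiableOn two_ne_zero).differentiableAt (Ioi_mem_nhds hy)
  rw [hderiv2, (hasDerivAt_derivCubeMulDeriv hgy (hg' y hy)).deriv, hderiv y hy,
    (hshrinker y hy).deriv_deriv_eq, derivCubeMulDeriv]
  field_simp
  ring

/-- If `g : (0,∞) → ℝ` is `C²` and satisfies the Yang–Mills shrinker equation, then
`h(y) = y³ g'(y)` satisfies `y² h'' = α h' + β h` with
`α(y) = (1/2) y (y² - 2d + 14)` and `β(y) = d - 10 + 3(d-2)(1-g)²`. -/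
theorem h_equation_yang_mills (d : ℕ) (hd : 3 ≤ d) (g : ℝ → ℝ)
    (hg : ContDiffOn ℝ 2 g (Ioi 0))
    (hode : ∀ y : ℝ, 0 < y →
      deriv (deriv g) y + (((d : ℝ) - 3) / y - y / 2) * deriv g y
        - ((d : ℝ) - 2) / y ^ 2 * (g y * (g y - 1) * (g y - 2)) = 0) :
    ∀ y : ℝ, 0 < y →
      y ^ 2 * deriv (deriv (fun z => z ^ 3 * deriv g z)) y =
        1 / 2 * y * (y ^ 2 - 2 * (d : ℝ) + 14) *
            deriv (fun z => z ^ 3 * deriv g z) y +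
          ((d : ℝ) - 10 + 3 * ((d : ℝ) - 2) * (1 - g y) ^ 2) *
            (y ^ 3 * deriv g y) :=
  h_equation_yang_mills_general d g hg hode
end

section
/- Let d ≥ 10 be an integer, let a > 0, and let g : [0,∞) → ℝ be a smooth function satisfying the Yang–Mills shrinker equation g''(y) + ((d-3)/y - y/2) g'(y) - (d-2)/y² · g(y)(g(y)-1)(g(y)-2) = 0 for all y > 0, with g(0) = 0, g'(0) = 0, and g''(0) = a. Then the function h(y) = y³ g'(y) satisfies h'(y) > 0 for all y > 0. -/
/-!
Eliminating `g''` with the equation, `h' = F := (6 - d + y²/2) y² g' + (d - 2) y g(g-1)(g-2)`,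
and differentiating once more gives the linear equation
`F' = ((7 - d)/y + y/2) F + β h`, `β = (d - 10 + 3 (d - 2)(g - 1)²)/y²`,
whose coupling coefficient `β` is nonnegative because `d ≥ 10`.
Near `0`, `F ~ 4a y³ > 0` and `h → 0`. If `F` had a first zero `y₀`, then `h` would be
increasing, hence nonnegative, on `(0, y₀)`, so `F e^{-Φ}` with `Φ' = (7 - d)/y + y/2` would be
nondecreasing there, although it is positive before `y₀` and nonpositive at `y₀`.
-/

open Real Set Filter Topology

theorem exists_first_nonpos_of_eventually_pos {F : ℝ → ℝ} (hF : ContinuousOn F (Ioi 0))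
    (hF0 : ∀ᶠ y in 𝓝[>] 0, 0 < F y) {Y : ℝ} (hY : 0 < Y) (hFY : F Y ≤ 0) :
    ∃ y₀, 0 < y₀ ∧ F y₀ ≤ 0 ∧ ∀ y ∈ Ioo 0 y₀, 0 < F y := by
  obtain ⟨ε, hε, hεF⟩ := mem_nhdsGT_iff_exists_Ioo_subset.mp hF0
  have hε : 0 < ε := hε
  set S := Icc (ε / 2) Y ∩ F ⁻¹' Iic 0
  have hεY : ε ≤ Y := not_lt.mp fun hYε => (hεF ⟨hY, hYε⟩ : 0 < F Y).not_ge hFY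
  have hS : IsCompact S := isCompact_Icc.of_isClosed_subset
    ((hF.mono fun y hy => (half_pos hε).trans_le hy.1).preimage_isClosed_of_isClosed
      isClosed_Icc isClosed_Iic) inter_subset_left
  obtain ⟨y₀, ⟨⟨hεy₀, hy₀Y⟩, hFy₀⟩, hleast⟩ :=
    hS.exists_isLeast ⟨Y, ⟨by linarith, le_rfl⟩, hFY⟩
  refine ⟨y₀, (half_pos hε).trans_le hεy₀, hFy₀, fun y hy => ?_⟩
  by_contra! hFy
  rcases lt_or_ge y ε with hyε | hεy
  · exact (hεF ⟨hy.1, hyε⟩ : 0 < F y).not_ge hFy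
  · exact hy.2.not_ge (hleast ⟨⟨by linarith, by linarith [hy.2]⟩, hFy⟩)

theorem MonotoneOn.le_of_tendsto_nhdsGT {h : ℝ → ℝ} {c b L : ℝ} (hmono : MonotoneOn h (Ioo c b))
    (hL : Tendsto h (𝓝[>] c) (𝓝 L)) {y : ℝ} (hy : y ∈ Ioo c b) : L ≤ h y :=
  le_of_tendsto hL <| by
    filter_upwards [Ioo_mem_nhdsGT hy.1] with z hz
    exact hmono ⟨hz.1, hz.2.trans hy.2⟩ hy hz.2.le

theorem pos_of_hasDerivAt_eq_linear {F h α β Φ : ℝ → ℝ}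
    (hh : ∀ y, 0 < y → HasDerivAt h (F y) y)
    (hF : ∀ y, 0 < y → HasDerivAt F (α y * F y + β y * h y) y)
    (hΦ : ∀ y, 0 < y → HasDerivAt Φ (α y) y)
    (hβ : ∀ y, 0 < y → 0 ≤ β y)
    (hh0 : Tendsto h (𝓝[>] 0) (𝓝 0)) (hF0 : ∀ᶠ y in 𝓝[>] 0, 0 < F y)
    {Y : ℝ} (hY : 0 < Y) : 0 < F Y := by
  by_contra! hFY
  obtain ⟨y₀, hy₀, hFy₀, hFpos⟩ := exists_first_nonpos_of_eventually_pos
    (fun y hy => (hF y hy).continuousAt.continuousWithinAt) hF0 hY hFY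
  have hh_mono : MonotoneOn h (Ioo 0 y₀) := by
    refine monotoneOn_of_hasDerivWithinAt_nonneg (convex_Ioo 0 y₀)
      (fun y hy => (hh y hy.1).continuousAt.continuousWithinAt) (fun y hy => ?_)
      (fun y hy => (hFpos y (interior_subset hy)).le)
    exact (hh y (interior_subset hy).1).hasDerivWithinAt
  set W := fun y => F y * exp (-Φ y)
  have hW : ∀ y, 0 < y → HasDerivAt W (β y * h y * exp (-Φ y)) y := fun y hy => by
    refine ((hF y hy).mul (hΦ y hy).neg.exp).congr_deriv ?_
    simp only [Pi.neg_apply]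
    ring
  have hW_mono : MonotoneOn W (Icc (y₀ / 2) y₀) := by
    have hint : interior (Icc (y₀ / 2) y₀) ⊆ Ioo 0 y₀ := by
      rw [interior_Icc]; exact Ioo_subset_Ioo_left (by linarith)
    refine monotoneOn_of_hasDerivWithinAt_nonneg (f' := fun y => β y * h y * exp (-Φ y))
      (convex_Icc _ _)
      (fun y hy => (hW y (by linarith [hy.1])).continuousAt.continuousWithinAt)
      (fun y hy => (hW y (hint hy).1).hasDerivWithinAt) (fun y hy => ?_)
    exact mul_nonneg (mul_nonneg (hβ y (hint hy).1)
      (hh_mono.le_of_tendsto_nhdsGT hh0 (hint hy))) (exp_pos _).le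
  have hWy₀ : W (y₀ / 2) ≤ W y₀ :=
    hW_mono ⟨le_rfl, by linarith⟩ ⟨by linarith, le_rfl⟩ (by linarith)
  have : 0 < W (y₀ / 2) := mul_pos (hFpos _ ⟨by linarith, by linarith⟩) (exp_pos _)
  have : W y₀ ≤ 0 := mul_nonpos_of_nonpos_of_nonneg hFy₀ (exp_pos _).le
  linarith

theorem ContDiffOn.hasDerivAt_deriv {f : ℝ → ℝ} {s : Set ℝ} (hf : ContDiffOn ℝ 2 f s) {y : ℝ}
    (hs : s ∈ 𝓝 y) : HasDerivAt (deriv f) (deriv (deriv f) y) y := by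
  have hf' : ContDiffOn ℝ 1 (deriv f) (interior s) :=
    (hf.mono interior_subset).deriv_of_isOpen isOpen_interior le_rfl
  exact ((hf'.differentiableOn one_ne_zero).differentiableAt
    (interior_mem_nhds.mpr hs)).hasDerivAt

theorem tendsto_deriv_div_nhdsGT_zero {g : ℝ → ℝ} {a : ℝ} (h0 : derivWithin g (Ici 0) 0 = 0)
    (ha : HasDerivWithinAt (derivWithin g (Ici 0)) a (Ici 0) 0) :
    Tendsto (fun y => deriv g y / y) (𝓝[>] 0) (𝓝 a) := by
  rw [hasDerivWithinAt_iff_tendsto_slope, Ici_sdiff_left] at ha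
  refine ha.congr' ?_
  filter_upwards [self_mem_nhdsWithin] with y (hy : 0 < y)
  rw [slope_def_field, h0, derivWithin_of_mem_nhds (Ici_mem_nhds hy), sub_zero, sub_zero]

theorem tendsto_div_sq_nhdsGT_zero {g : ℝ → ℝ} {a : ℝ}
    (hg : ∀ᶠ y in 𝓝[>] 0, DifferentiableAt ℝ g y) (hg0 : Tendsto g (𝓝[>] 0) (𝓝 0))
    (hg' : Tendsto (fun y => deriv g y / y) (𝓝[>] 0) (𝓝 a)) :
    Tendsto (fun y => g y / y ^ 2) (𝓝[>] 0) (𝓝 (a / 2)) := by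
  refine deriv.lhopital_zero_nhdsGT hg ?_ hg0 ?_ ?_
  · filter_upwards [self_mem_nhdsWithin] with y (hy : 0 < y)
    simp [hy.ne']
  · exact (continuous_pow 2).tendsto' 0 0 (zero_pow two_ne_zero) |>.mono_left nhdsWithin_le_nhds
  · refine (hg'.div_const 2).congr' ?_
    filter_upwards with y
    simp [div_div, mul_comm]

theorem tendsto_cube_mul_nhdsGT_zero {u : ℝ → ℝ} {a : ℝ}
    (hu : Tendsto (fun y => u y / y) (𝓝[>] 0) (𝓝 a)) :
    Tendsto (fun y => y ^ 3 * u y) (𝓝[>] 0) (𝓝 0) := by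
  have h4 : Tendsto (fun y : ℝ => y ^ 4) (𝓝[>] 0) (𝓝 0) :=
    (continuous_pow 4).tendsto' 0 0 (zero_pow four_ne_zero) |>.mono_left nhdsWithin_le_nhds
  refine (by simpa using hu.mul h4 : Tendsto (fun y => u y / y * y ^ 4) _ _).congr' ?_
  filter_upwards [self_mem_nhdsWithin] with y (hy : 0 < y)
  field_simp

theorem eventually_pos_of_tendsto_div_pow_nhdsGT_zero {F : ℝ → ℝ} {c : ℝ} {n : ℕ} (hc : 0 < c)
    (hF : Tendsto (fun y => F y / y ^ n) (𝓝[>] 0) (𝓝 c)) : ∀ᶠ y in 𝓝[>] 0, 0 < F y := by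
  filter_upwards [hF.eventually (eventually_gt_nhds hc), self_mem_nhdsWithin]
    with y hFy (hy : 0 < y)
  exact (div_pos_iff_of_pos_right (pow_pos hy n)).mp hFy

def IsYangMillsShrinker (d : ℝ) (g : ℝ → ℝ) : Prop :=
  ∀ y : ℝ, 0 < y →
    deriv (deriv g) y + ((d - 3) / y - y / 2) * deriv g y
      - (d - 2) / y ^ 2 * (g y * (g y - 1) * (g y - 2)) = 0

/-- `(y³ g')'` with `g''` eliminated through the shrinker equation. -/
noncomputable def shrinkerFlux (d : ℝ) (g : ℝ → ℝ) (y : ℝ) : ℝ :=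
  (6 - d + y ^ 2 / 2) * y ^ 2 * deriv g y + (d - 2) * y * (g y * (g y - 1) * (g y - 2))

namespace IsYangMillsShrinker

variable {d : ℝ} {g : ℝ → ℝ}

theorem deriv_deriv_eq (hode : IsYangMillsShrinker d g) {y : ℝ} (hy : 0 < y) :
    deriv (deriv g) y
      = (d - 2) / y ^ 2 * (g y * (g y - 1) * (g y - 2)) - ((d - 3) / y - y / 2) * deriv g y := by
  linarith [hode y hy]

theorem hasDerivAt_cube_mul_deriv (hode : IsYangMillsShrinker d g) {y : ℝ} (hy : 0 < y)
    (hg' : HasDerivAt (deriv g) (deriv (deriv g) y) y) :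
    HasDerivAt (fun z => z ^ 3 * deriv g z) (shrinkerFlux d g y) y := by
  refine ((hasDerivAt_pow 3 y).mul hg').congr_deriv ?_
  rw [hode.deriv_deriv_eq hy, shrinkerFlux]
  field_simp
  ring

theorem hasDerivAt_shrinkerFlux (hode : IsYangMillsShrinker d g) {y : ℝ} (hy : 0 < y)
    (hg : HasDerivAt g (deriv g y) y) (hg' : HasDerivAt (deriv g) (deriv (deriv g) y) y) :
    HasDerivAt (shrinkerFlux d g)
      (((7 - d) / y + y / 2) * shrinkerFlux d g y
        + (d - 10 + 3 * (d - 2) * (g y - 1) ^ 2) / y ^ 2 * (y ^ 3 * deriv g y)) y := by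
  have hP := (hg.mul (hg.sub_const 1)).mul (hg.sub_const 2)
  have hF := ((((hasDerivAt_pow 2 y).div_const 2).const_add (6 - d)).mul
    (hasDerivAt_pow 2 y)).mul hg' |>.add (((hasDerivAt_id y).const_mul (d - 2)).mul hP)
  refine hF.congr_deriv ?_
  simp only [Pi.mul_apply, shrinkerFlux, id, hode.deriv_deriv_eq hy]
  field_simp
  ring

end IsYangMillsShrinker

theorem tendsto_shrinkerFlux_div_cube {d a : ℝ} {g : ℝ → ℝ} (hg0 : Tendsto g (𝓝[>] 0) (𝓝 0))
    (hg' : Tendsto (fun y => deriv g y / y) (𝓝[>] 0) (𝓝 a))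
    (hg : Tendsto (fun y => g y / y ^ 2) (𝓝[>] 0) (𝓝 (a / 2))) :
    Tendsto (fun y => shrinkerFlux d g y / y ^ 3) (𝓝[>] 0) (𝓝 (4 * a)) := by
  have hcoef : Tendsto (fun y : ℝ => 6 - d + y ^ 2 / 2) (𝓝[>] 0) (𝓝 (6 - d + 0 ^ 2 / 2)) :=
    (continuous_const.add ((continuous_pow 2).div_const 2)).tendsto 0 |>.mono_left
      nhdsWithin_le_nhds
  have hlim := (hcoef.mul hg').add
    ((tendsto_const_nhds (x := d - 2)).mul hg |>.mul ((hg0.sub_const 1).mul (hg0.sub_const 2)))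
  rw [show (6 - d + 0 ^ 2 / 2) * a + (d - 2) * (a / 2) * ((0 - 1) * (0 - 2)) = 4 * a by ring]
    at hlim
  refine hlim.congr' ?_
  filter_upwards [self_mem_nhdsWithin] with y (hy : 0 < y)
  simp only [shrinkerFlux]
  field_simp

theorem eventually_pos_shrinkerFlux {d a : ℝ} {g : ℝ → ℝ} (ha : 0 < a)
    (hg : ∀ᶠ y in 𝓝[>] 0, DifferentiableAt ℝ g y) (hg0 : Tendsto g (𝓝[>] 0) (𝓝 0))
    (hg' : Tendsto (fun y => deriv g y / y) (𝓝[>] 0) (𝓝 a)) :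
    ∀ᶠ y in 𝓝[>] 0, 0 < shrinkerFlux d g y :=
  eventually_pos_of_tendsto_div_pow_nhdsGT_zero (by positivity)
    (tendsto_shrinkerFlux_div_cube hg0 hg' (tendsto_div_sq_nhdsGT_zero hg hg0 hg'))

/-- For `d ≥ 10` and a smooth solution `g` of the Yang–Mills shrinker equation on `[0,∞)`
with `g(0) = g'(0) = 0` and `g''(0) = a > 0`, the function `h(y) = y³ g'(y)` satisfies
`h'(y) > 0` for all `y > 0`. -/
theorem h_deriv_positive_yang_mills (d : ℕ) (hd : 10 ≤ d) (a : ℝ) (ha : 0 < a)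
    (g : ℝ → ℝ)
    (hg : ContDiffOn ℝ (⊤ : ℕ∞) g (Ici 0))
    (hode : ∀ y : ℝ, 0 < y →
      deriv (deriv g) y + (((d : ℝ) - 3) / y - y / 2) * deriv g y
        - ((d : ℝ) - 2) / y ^ 2 * (g y * (g y - 1) * (g y - 2)) = 0)
    (hg0 : g 0 = 0)
    (hg'0 : derivWithin g (Ici 0) 0 = 0)
    (hg''0 : derivWithin (derivWithin g (Ici 0)) (Ici 0) 0 = a) :
    ∀ y : ℝ, 0 < y → 0 < deriv (fun z => z ^ 3 * deriv g z) y := by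
  have hode : IsYangMillsShrinker d g := hode
  have hg2 : ContDiffOn ℝ 2 g (Ici 0) := hg.of_le (WithTop.coe_le_coe.mpr le_top)
  have hg' : ∀ y, 0 < y → HasDerivAt g (deriv g y) y := fun y hy =>
    ((hg2.differentiableOn two_ne_zero).differentiableAt (Ici_mem_nhds hy)).hasDerivAt
  have hg'' : ∀ y, 0 < y → HasDerivAt (deriv g) (deriv (deriv g) y) y := fun y hy =>
    hg2.hasDerivAt_deriv (Ici_mem_nhds hy)
  have hlim0 : Tendsto g (𝓝[>] 0) (𝓝 0) := by
    simpa [hg0] using ((hg2.continuousOn.continuousWithinAt self_mem_Ici).mono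
      Ioi_subset_Ici_self).tendsto
  have hlim1 : Tendsto (fun y => deriv g y / y) (𝓝[>] 0) (𝓝 a) :=
    tendsto_deriv_div_nhdsGT_zero hg'0 <| hg''0 ▸
      ((hg2.derivWithin (uniqueDiffOn_Ici 0) le_rfl).differentiableOn one_ne_zero 0
        self_mem_Ici).hasDerivWithinAt
  intro y hy
  rw [(hode.hasDerivAt_cube_mul_deriv hy (hg'' y hy)).deriv]
  refine pos_of_hasDerivAt_eq_linear (Φ := fun y => (7 - d) * log y + y ^ 2 / 4)
    (α := fun y => (7 - d) / y + y / 2)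
    (β := fun y => (d - 10 + 3 * (d - 2) * (g y - 1) ^ 2) / y ^ 2)
    (fun y hy => hode.hasDerivAt_cube_mul_deriv hy (hg'' y hy))
    (fun y hy => hode.hasDerivAt_shrinkerFlux hy (hg' y hy) (hg'' y hy)) (fun y hy => ?_)
    (fun y hy => ?_) (tendsto_cube_mul_nhdsGT_zero hlim1) ?_ hy
  · exact ((hasDerivAt_log hy.ne').const_mul _ |>.add
      ((hasDerivAt_pow 2 y).div_const 4)).congr_deriv (by field_simp; ring)
  · have hd' : (10 : ℝ) ≤ d := by exact_mod_cast hd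
    have : 0 ≤ 3 * ((d : ℝ) - 2) * (g y - 1) ^ 2 :=
      mul_nonneg (by linarith) (sq_nonneg _)
    exact div_nonneg (by linarith) (sq_nonneg y)
  · exact eventually_pos_shrinkerFlux ha
      (eventually_nhdsWithin_of_forall fun y hy => (hg' y hy).differentiableAt) hlim0 hlim1
end

section
/- Let d be an integer with 5 ≤ d ≤ 9, and set γ = (1/2)(6d - 12 - (d+2)√(2d-4)) and δ = √(d-2)/(2√2). Then γ > 0, and the function g₁(y) = y²/(γ + δ y²) satisfies the Yang–Mills shrinker equation g₁''(y) + ((d-3)/y - y/2) g₁'(y) - (d-2)/y² · g₁(y)(g₁(y)-1)(g₁(y)-2) = 0 for all y > 0. -/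
open Real Set Filter Topology

/-!
Substituting `g = y² / (γ + δ y²)` into the shrinker equation leaves the rational function
`((3(d-2) - 2(d+2)δ - γ)(γ y² + δ y⁴) + (8δ² - (d-2)) y⁴) / (γ + δ y²)³`,
so `g` is a shrinker as soon as `8δ² = d - 2` and `γ = 3(d-2) - 2(d+2)δ`. The given `δ` solves the
first equation and `√(2d-4) = 4δ` turns the given `γ` into the second. Finally `γ > 0` amounts to
`(d+2)² < 18(d-2)`, i.e. `4 < d < 10`.
-/

noncomputable def yangMillsShrinkerOperator (d : ℝ) (g : ℝ → ℝ) (y : ℝ) : ℝ :=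
  deriv (deriv g) y + ((d - 3) / y - y / 2) * deriv g y
    - (d - 2) / y ^ 2 * (g y * (g y - 1) * (g y - 2))

section SqDivQuadratic

variable {γ δ : ℝ}

theorem hasDerivAt_quadratic (y : ℝ) :
    HasDerivAt (fun y : ℝ => γ + δ * y ^ 2) (2 * δ * y) y := by
  simpa [mul_comm, mul_left_comm] using ((hasDerivAt_pow 2 y).const_mul δ).const_add γ

theorem hasDerivAt_sq_div_quadratic {y : ℝ} (hy : γ + δ * y ^ 2 ≠ 0) :
    HasDerivAt (fun y : ℝ => y ^ 2 / (γ + δ * y ^ 2)) (2 * γ * y / (γ + δ * y ^ 2) ^ 2) y := by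
  refine ((hasDerivAt_pow 2 y).fun_div (hasDerivAt_quadratic y) hy).congr_deriv ?_
  congr 1
  push_cast
  ring

theorem hasDerivAt_mul_div_quadratic_sq {y : ℝ} (hy : γ + δ * y ^ 2 ≠ 0) :
    HasDerivAt (fun y : ℝ => 2 * γ * y / (γ + δ * y ^ 2) ^ 2)
      (2 * γ * (γ - 3 * δ * y ^ 2) / (γ + δ * y ^ 2) ^ 3) y := by
  have hnum : HasDerivAt (fun y : ℝ => 2 * γ * y) (2 * γ) y := by
    simpa using (hasDerivAt_id y).const_mul (2 * γ)
  refine (hnum.fun_div ((hasDerivAt_quadratic y).fun_pow 2) (pow_ne_zero 2 hy)).congr_deriv ?_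
  field_simp
  ring

theorem deriv_sq_div_quadratic (hD : ∀ y, γ + δ * y ^ 2 ≠ 0) :
    deriv (fun y : ℝ => y ^ 2 / (γ + δ * y ^ 2)) = fun y => 2 * γ * y / (γ + δ * y ^ 2) ^ 2 :=
  funext fun y => (hasDerivAt_sq_div_quadratic (hD y)).deriv

theorem yangMillsShrinkerOperator_sq_div_quadratic (d : ℝ) (hD : ∀ y, γ + δ * y ^ 2 ≠ 0)
    {y : ℝ} (hy : y ≠ 0) :
    yangMillsShrinkerOperator d (fun y => y ^ 2 / (γ + δ * y ^ 2)) y =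
      ((3 * (d - 2) - 2 * (d + 2) * δ - γ) * (γ * y ^ 2 + δ * y ^ 4)
        + (8 * δ ^ 2 - (d - 2)) * y ^ 4) / (γ + δ * y ^ 2) ^ 3 := by
  have hDy := hD y
  rw [yangMillsShrinkerOperator, deriv_sq_div_quadratic hD,
    (hasDerivAt_mul_div_quadratic_sq hDy).deriv]
  field_simp
  ring

theorem yangMillsShrinkerOperator_sq_div_quadratic_eq_zero {d : ℝ}
    (hδ : 8 * δ ^ 2 = d - 2) (hγ : γ = 3 * (d - 2) - 2 * (d + 2) * δ)
    (hD : ∀ y, γ + δ * y ^ 2 ≠ 0) {y : ℝ} (hy : y ≠ 0) :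
    yangMillsShrinkerOperator d (fun y => y ^ 2 / (γ + δ * y ^ 2)) y = 0 := by
  rw [yangMillsShrinkerOperator_sq_div_quadratic d hD hy, hδ, ← hγ]
  simp

end SqDivQuadratic

section Coefficients

variable {d : ℝ}

theorem eight_mul_sq_sqrt_sub_two_div (hd : 2 ≤ d) :
    8 * (√(d - 2) / (2 * √2)) ^ 2 = d - 2 := by
  rw [div_pow, mul_pow, sq_sqrt (by linarith), sq_sqrt zero_le_two]
  ring

theorem sqrt_two_mul_sub_four (d : ℝ) : √(2 * d - 4) = 4 * (√(d - 2) / (2 * √2)) := by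
  have h2 : √2 * √2 = 2 := mul_self_sqrt zero_le_two
  rw [show 2 * d - 4 = 2 * (d - 2) by ring, sqrt_mul zero_le_two]
  field_simp
  linear_combination 2 * √(d - 2) * h2

theorem mul_sqrt_sub_two_div_lt (hd4 : 4 < d) (hd10 : d < 10) :
    2 * (d + 2) * (√(d - 2) / (2 * √2)) < 3 * (d - 2) := by
  have hsq := eight_mul_sq_sqrt_sub_two_div (d := d) (by linarith)
  refine lt_of_pow_lt_pow_left₀ 2 (by linarith) ?_
  -- `(2(d+2)δ)² = (d+2)²(d-2)/2 < 9(d-2)²` is `(d - 4)(d - 10) < 0`.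
  nlinarith [mul_pos (sub_pos.2 hd4) (sub_pos.2 hd10)]

end Coefficients

/-- For `5 ≤ d ≤ 9`, with `γ = (1/2)(6d - 12 - (d+2)√(2d-4))` and `δ = √(d-2)/(2√2)`,
one has `γ > 0` and the explicit function `g₁(y) = y²/(γ + δ y²)` solves the Yang–Mills
shrinker equation for all `y > 0`. -/
theorem explicit_yang_mills_shrinker (d : ℕ) (hd5 : 5 ≤ d) (hd9 : d ≤ 9)
    (γ δ : ℝ)
    (hγ : γ = 1 / 2 * (6 * (d : ℝ) - 12 - ((d : ℝ) + 2) * Real.sqrt (2 * (d : ℝ) - 4)))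
    (hδ : δ = Real.sqrt ((d : ℝ) - 2) / (2 * Real.sqrt 2))
    (g₁ : ℝ → ℝ) (hg₁ : g₁ = fun y => y ^ 2 / (γ + δ * y ^ 2)) :
    0 < γ ∧
    ∀ y : ℝ, 0 < y →
      deriv (deriv g₁) y + (((d : ℝ) - 3) / y - y / 2) * deriv g₁ y
        - ((d : ℝ) - 2) / y ^ 2 * (g₁ y * (g₁ y - 1) * (g₁ y - 2)) = 0 := by
  have hd5' : (5 : ℝ) ≤ d := by exact_mod_cast hd5
  have hd9' : (d : ℝ) ≤ 9 := by exact_mod_cast hd9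
  have hγ' : γ = 3 * ((d : ℝ) - 2) - 2 * ((d : ℝ) + 2) * δ := by
    rw [hγ, sqrt_two_mul_sub_four, ← hδ]
    ring
  have hγpos : 0 < γ := by
    rw [hγ', hδ, sub_pos]
    exact mul_sqrt_sub_two_div_lt (by linarith) (by linarith)
  have hδnonneg : 0 ≤ δ := by rw [hδ]; positivity
  refine ⟨hγpos, fun y hy => ?_⟩
  subst hg₁
  exact yangMillsShrinkerOperator_sq_div_quadratic_eq_zero
    (by rw [hδ]; exact eight_mul_sq_sqrt_sub_two_div (by linarith)) hγ'
    (fun y => by positivity) hy.ne'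
end
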